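/- In the polynomial ring ℚ[a,b] in two indeterminates a, b, define sequences (λ_n) and (s_n) of polynomials by λ₀ = a, s₀ = b, and for n ≥ 1, λ_n = a·λ_{n−1} + s_{n−1} and s_n = b·λ_{n−1}. Then for every n ≥ 1, λ_n·s_{n−1} ≠ λ_{n−1}·s_n in ℚ[a,b]; that is, the DAIM terminating condition never holds identically in a and b for the constant-coefficient difference equation Δ²y = aΔy + by. -/
import Mathlib


open MvPolynomial

/-- The scalar DAIM sequences `(λ_n, s_n)` for the constant-coefficient equation
`Δ²y = aΔy + by`, computed in the polynomial ring `ℚ[a,b]`: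
`λ₀ = a`, `s₀ = b`, `λ_n = a·λ_{n-1} + s_{n-1}`, `s_n = b·λ_{n-1}`. -/
noncomputable def daimP : ℕ → MvPolynomial (Fin 2) ℚ × MvPolynomial (Fin 2) ℚ
  | 0 => (X 0, X 1)
  | n + 1 => (X 0 * (daimP n).1 + (daimP n).2, X 1 * (daimP n).1)

/-- Evaluation of `daimP` at `a = b = 1`. -/
noncomputable def daimE (n : ℕ) : ℚ × ℚ :=
  (eval (fun _ => (1 : ℚ)) (daimP n).1, eval (fun _ => (1 : ℚ)) (daimP n).2)

lemma daimE_zero : daimE 0 = (1, 1) := by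
  simp [daimE, daimP]

lemma daimE_succ (n : ℕ) :
    daimE (n + 1) = ((daimE n).1 + (daimE n).2, (daimE n).1) := by
  simp [daimE, daimP]

lemma cassini : ∀ n : ℕ,
    (daimE (n + 1)).1 * (daimE n).2 - (daimE n).1 * (daimE (n + 1)).2 = (-1) ^ n := by
  intro n
  induction n with
  | zero => simp [daimE_succ, daimE_zero]
  | succ m ih =>
    rw [daimE_succ (m + 1), daimE_succ m] at *
    push_cast
    ring_nf
    ring_nf at ih
    linarith

theorem stmt_19 : ∀ n : ℕ, 1 ≤ n →
    (daimP n).1 * (daimP (n - 1)).2 ≠ (daimP (n - 1)).1 * (daimP n).2 := by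
  intro n hn h
  obtain ⟨m, rfl⟩ := Nat.exists_eq_add_of_le hn
  have h' := congrArg (eval (fun _ => (1 : ℚ))) h
  simp only [map_mul] at h'
  have hc := cassini m
  have : (1 + m - 1) = m := by omega
  rw [this] at h'
  have hzero : (daimE (m + 1)).1 * (daimE m).2 - (daimE m).1 * (daimE (m + 1)).2 = 0 := by
    simp only [daimE]
    rw [show m + 1 = 1 + m by omega]
    rw [h']
    ring
  rw [hc] at hzero
  exact (pow_ne_zero m (by norm_num : (-1 : ℚ) ≠ 0)) hzero
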